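/- (Hardy–Littlewood inequality for polarization on a domain.) Let p ∈ (1, ∞), let H be an open affine half-space in ℝ^N with 0 ∈ closure(H), and let Ω ⊂ ℝ^N be a bounded open set satisfying Ω = Ω_H. Let v, w ∈ L^p(Ω) be such that v·w is integrable on Ω, at least one of v and w is nonnegative a.e. on Ω, and the product v_H·w_H of their polarizations is integrable on Ω. Then ∫_Ω v(x) w(x) dx ≤ ∫_Ω v_H(x) w_H(x) dx. -/

import Mathlib

open MeasureTheory
open scoped RealInnerProductSpace ENNReal

/-- Reflection of `ℝ^N` across the hyperplane `{x : ⟪x, u⟫ = c}` (for a unit vector `u`). -/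
noncomputable def reflHyp {N : ℕ} (u : EuclideanSpace ℝ (Fin N)) (c : ℝ)
    (x : EuclideanSpace ℝ (Fin N)) : EuclideanSpace ℝ (Fin N) :=
  x - (2 * (⟪x, u⟫ - c)) • u

/-- The open affine half-space `{x : ⟪x, u⟫ < c}`. -/
def halfSpace {N : ℕ} (u : EuclideanSpace ℝ (Fin N)) (c : ℝ) :
    Set (EuclideanSpace ℝ (Fin N)) :=
  {x | ⟪x, u⟫ < c}

/-- Polarization of a set `Ω` with respect to the half-space `H = halfSpace u c`:
`Ω_H = ((Ω ∪ σ_H(Ω)) ∩ H) ∪ (Ω ∩ σ_H(Ω))`. -/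
noncomputable def polSet {N : ℕ} (u : EuclideanSpace ℝ (Fin N)) (c : ℝ)
    (Ω : Set (EuclideanSpace ℝ (Fin N))) : Set (EuclideanSpace ℝ (Fin N)) :=
  ((Ω ∪ reflHyp u c '' Ω) ∩ halfSpace u c) ∪ (Ω ∩ reflHyp u c '' Ω)

/-- Polarization of a function `f : ℝ^N → ℝ` with respect to `H = halfSpace u c`:
`f_H(x) = max (f x) (f (σ_H x))` if `x ∈ H`, and `f_H(x) = min (f x) (f (σ_H x))` otherwise. -/
noncomputable def polFun {N : ℕ} (u : EuclideanSpace ℝ (Fin N)) (c : ℝ)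
    (f : EuclideanSpace ℝ (Fin N) → ℝ) (x : EuclideanSpace ℝ (Fin N)) : ℝ :=
  if ⟪x, u⟫ < c then max (f x) (f (reflHyp u c x))
  else min (f x) (f (reflHyp u c x))

/-!
For `x` off the hyperplane `∂H`, the pair `(x, σ_H x)` carries the values `(f x, f (σ_H x))`,
which polarization sorts (larger value on the `H` side), and the two-point rearrangement
inequality `ab + a'b' ≤ max a a' · max b b' + min a a' · min b b'` gives
`f g (x) + f g (σ_H x) ≤ f_H g_H (x) + f_H g_H (σ_H x)`. Since `σ_H` is a measure-preserving
involution and `∂H` is null, integrating yields `∫ f g ≤ ∫ f_H g_H` over `ℝ^N`.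
For `f = 1_Ω v`, `g = 1_Ω w` both sides live on `Ω`: the left one obviously, the right one because
`Ω_H = Ω` forces `σ_H x ∉ Ω` for `x ∈ H \ Ω`, while for `x ∉ H ∪ Ω` the nonnegative factor is a
minimum of `0` and a nonnegative value.
-/

theorem mul_add_mul_le_max_mul_max_add_min_mul_min (a a' b b' : ℝ) :
    a * b + a' * b' ≤ max a a' * max b b' + min a a' * min b b' := by
  rcases le_total a a' with ha | ha <;> rcases le_total b b' with hb | hb <;>
    simp only [max_eq_left, max_eq_right, min_eq_left, min_eq_right, ha, hb] <;> nlinarith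

theorem integral_le_integral_of_add_comp_le {α : Type*} [MeasurableSpace α] {μ : Measure α}
    {σ : α → α} (hσ : MeasurePreserving σ μ μ) (hσ_inv : Function.Involutive σ)
    {φ ψ : α → ℝ} (hφ : Integrable φ μ) (hψ : Integrable ψ μ)
    (h : ∀ᵐ x ∂μ, φ x + φ (σ x) ≤ ψ x + ψ (σ x)) :
    ∫ x, φ x ∂μ ≤ ∫ x, ψ x ∂μ := by
  have integral_comp (χ : α → ℝ) : ∫ x, χ (σ x) ∂μ = ∫ x, χ x ∂μ :=
    hσ.integral_comp (MeasurableEquiv.ofInvolutive σ hσ_inv hσ.measurable).measurableEmbedding χ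
  have hφσ : Integrable (fun x => φ (σ x)) μ := hσ.integrable_comp_of_integrable hφ
  have hψσ : Integrable (fun x => ψ (σ x)) μ := hσ.integrable_comp_of_integrable hψ
  have hsum : ∫ x, (φ x + φ (σ x)) ∂μ ≤ ∫ x, (ψ x + ψ (σ x)) ∂μ :=
    integral_mono_ae (hφ.add hφσ) (hψ.add hψσ) h
  rw [integral_add hφ hφσ, integral_add hψ hψσ, integral_comp, integral_comp] at hsum
  linarith

section Polarization

variable {N : ℕ} {u : EuclideanSpace ℝ (Fin N)} {c : ℝ}

theorem inner_reflHyp (hu : ‖u‖ = 1) (x : EuclideanSpace ℝ (Fin N)) :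
    ⟪reflHyp u c x, u⟫ = 2 * c - ⟪x, u⟫ := by
  rw [reflHyp, inner_sub_left, real_inner_smul_left, real_inner_self_eq_norm_sq, hu]
  ring

theorem reflHyp_involutive (hu : ‖u‖ = 1) : Function.Involutive (reflHyp u c) := by
  intro x
  conv_lhs => rw [reflHyp, inner_reflHyp hu]
  rw [reflHyp]
  module

theorem reflHyp_eq_reflection_add (hu : ‖u‖ = 1) :
    reflHyp u c = fun x => (ℝ ∙ u)ᗮ.reflection x + (2 * c) • u := by
  funext x
  rw [Submodule.reflection_orthogonal_apply, Submodule.reflection_apply,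
    Submodule.starProjection_singleton, reflHyp, hu, real_inner_comm u x]
  push_cast
  module

theorem measurePreserving_reflHyp (hu : ‖u‖ = 1) :
    MeasurePreserving (reflHyp u c) volume volume := by
  rw [reflHyp_eq_reflection_add hu]
  exact (measurePreserving_add_right volume _).comp (ℝ ∙ u)ᗮ.reflection.measurePreserving

theorem ae_inner_ne (hu : ‖u‖ = 1) : ∀ᵐ x : EuclideanSpace ℝ (Fin N), ⟪x, u⟫ ≠ c := by
  have hplane : {x : EuclideanSpace ℝ (Fin N) | ⟪x, u⟫ = c}
      = (AffineSubspace.mk' (c • u) (ℝ ∙ u)ᗮ : Set (EuclideanSpace ℝ (Fin N))) := by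
    ext x
    simp only [Set.mem_ofPred_eq, SetLike.mem_coe, AffineSubspace.mem_mk', vsub_eq_sub,
      Submodule.mem_orthogonal_singleton_iff_inner_right, inner_sub_right,
      real_inner_smul_right, real_inner_self_eq_norm_sq, hu, real_inner_comm u x]
    constructor <;> intro h <;> linarith
  have hnull : volume {x : EuclideanSpace ℝ (Fin N) | ⟪x, u⟫ = c} = 0 := by
    rw [hplane]
    refine Measure.addHaar_affineSubspace _ _ fun htop => ?_
    have hmem : (c + 1) • u ∈ {x : EuclideanSpace ℝ (Fin N) | ⟪x, u⟫ = c} := by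
      rw [hplane, htop]; exact AffineSubspace.mem_top ℝ _ _
    simp only [Set.mem_ofPred_eq, real_inner_smul_left, real_inner_self_eq_norm_sq, hu] at hmem
    linarith
  simpa [ae_iff] using hnull

theorem polFun_of_inner_lt (f : EuclideanSpace ℝ (Fin N) → ℝ) {x : EuclideanSpace ℝ (Fin N)}
    (hx : ⟪x, u⟫ < c) : polFun u c f x = max (f x) (f (reflHyp u c x)) :=
  if_pos hx

theorem polFun_of_le_inner (f : EuclideanSpace ℝ (Fin N) → ℝ) {x : EuclideanSpace ℝ (Fin N)}
    (hx : c ≤ ⟪x, u⟫) : polFun u c f x = min (f x) (f (reflHyp u c x)) :=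
  if_neg hx.not_gt

theorem mul_add_mul_reflHyp_le_polFun_of_inner_lt (hu : ‖u‖ = 1)
    (f g : EuclideanSpace ℝ (Fin N) → ℝ) {x : EuclideanSpace ℝ (Fin N)} (hx : ⟪x, u⟫ < c) :
    f x * g x + f (reflHyp u c x) * g (reflHyp u c x) ≤
      polFun u c f x * polFun u c g x +
        polFun u c f (reflHyp u c x) * polFun u c g (reflHyp u c x) := by
  have hσx : c ≤ ⟪reflHyp u c x, u⟫ := by rw [inner_reflHyp hu]; linarith
  rw [polFun_of_inner_lt f hx, polFun_of_inner_lt g hx, polFun_of_le_inner f hσx,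
    polFun_of_le_inner g hσx, reflHyp_involutive hu x, min_comm (f _), min_comm (g _)]
  exact mul_add_mul_le_max_mul_max_add_min_mul_min _ _ _ _

theorem mul_add_mul_reflHyp_le_polFun (hu : ‖u‖ = 1)
    (f g : EuclideanSpace ℝ (Fin N) → ℝ) {x : EuclideanSpace ℝ (Fin N)} (hx : ⟪x, u⟫ ≠ c) :
    f x * g x + f (reflHyp u c x) * g (reflHyp u c x) ≤
      polFun u c f x * polFun u c g x +
        polFun u c f (reflHyp u c x) * polFun u c g (reflHyp u c x) := by
  rcases hx.lt_or_gt with hlt | hgt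
  · exact mul_add_mul_reflHyp_le_polFun_of_inner_lt hu f g hlt
  · have hσx : ⟪reflHyp u c x, u⟫ < c := by rw [inner_reflHyp hu]; linarith
    have h := mul_add_mul_reflHyp_le_polFun_of_inner_lt hu f g hσx
    rw [reflHyp_involutive hu x] at h
    linarith

theorem reflHyp_notMem_of_notMem {Ω : Set (EuclideanSpace ℝ (Fin N))} (hu : ‖u‖ = 1)
    (hΩ : polSet u c Ω ⊆ Ω) {x : EuclideanSpace ℝ (Fin N)} (hxΩ : x ∉ Ω)
    (hxH : x ∈ halfSpace u c) : reflHyp u c x ∉ Ω :=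
  fun hσx => hxΩ (hΩ (Or.inl ⟨Or.inr ⟨reflHyp u c x, hσx, reflHyp_involutive hu x⟩, hxH⟩))

theorem polFun_indicator_eq_zero {Ω : Set (EuclideanSpace ℝ (Fin N))} (hu : ‖u‖ = 1)
    (hΩ : polSet u c Ω ⊆ Ω) {f : EuclideanSpace ℝ (Fin N) → ℝ} {x : EuclideanSpace ℝ (Fin N)}
    (hxΩ : x ∉ Ω) (hσx : 0 ≤ Ω.indicator f (reflHyp u c x)) :
    polFun u c (Ω.indicator f) x = 0 := by
  rcases lt_or_ge ⟪x, u⟫ c with hlt | hge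
  · rw [polFun_of_inner_lt _ hlt, Set.indicator_of_notMem hxΩ,
      Set.indicator_of_notMem (reflHyp_notMem_of_notMem hu hΩ hxΩ hlt), max_self]
  · rw [polFun_of_le_inner _ hge, Set.indicator_of_notMem hxΩ]
    exact min_eq_left hσx

theorem polFun_mul_polFun_indicator_ae_eq {Ω : Set (EuclideanSpace ℝ (Fin N))} (hu : ‖u‖ = 1)
    (hΩm : MeasurableSet Ω) (hΩ : polSet u c Ω ⊆ Ω) {v w : EuclideanSpace ℝ (Fin N) → ℝ}
    (hsign : (∀ᵐ x ∂volume.restrict Ω, 0 ≤ v x) ∨ (∀ᵐ x ∂volume.restrict Ω, 0 ≤ w x)) :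
    (fun x => polFun u c (Ω.indicator v) x * polFun u c (Ω.indicator w) x) =ᵐ[volume]
      Ω.indicator (fun x => polFun u c (Ω.indicator v) x * polFun u c (Ω.indicator w) x) := by
  have nonneg_comp {f : EuclideanSpace ℝ (Fin N) → ℝ} (hf : ∀ᵐ x ∂volume.restrict Ω, 0 ≤ f x) :
      ∀ᵐ x, 0 ≤ Ω.indicator f (reflHyp u c x) := by
    refine (measurePreserving_reflHyp (c := c) hu).quasiMeasurePreserving.ae
      (p := fun y => 0 ≤ Ω.indicator f y) ?_
    filter_upwards [(ae_restrict_iff' hΩm).1 hf] with x hx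
    exact Set.indicator_apply_nonneg hx
  have vanish : ∀ᵐ x, x ∉ Ω →
      polFun u c (Ω.indicator v) x * polFun u c (Ω.indicator w) x = 0 := by
    rcases hsign with hv | hw
    · filter_upwards [nonneg_comp hv] with x hx hxΩ
      rw [polFun_indicator_eq_zero hu hΩ hxΩ hx, zero_mul]
    · filter_upwards [nonneg_comp hw] with x hx hxΩ
      rw [polFun_indicator_eq_zero hu hΩ hxΩ hx, mul_zero]
  filter_upwards [vanish] with x hx
  by_cases hxΩ : x ∈ Ω
  · rw [Set.indicator_of_mem hxΩ]
  · rw [Set.indicator_of_notMem hxΩ, hx hxΩ]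

end Polarization

theorem polFun_hardy_littlewood_domain_general {N : ℕ}
    (u : EuclideanSpace ℝ (Fin N)) (hu : ‖u‖ = 1) (c : ℝ)
    (Ω : Set (EuclideanSpace ℝ (Fin N))) (hopen : IsOpen Ω)
    (hΩ : Ω = polSet u c Ω)
    (v w : EuclideanSpace ℝ (Fin N) → ℝ)
    (hvw : Integrable (fun x => v x * w x) (volume.restrict Ω))
    (hsign : (∀ᵐ x ∂volume.restrict Ω, 0 ≤ v x) ∨ (∀ᵐ x ∂volume.restrict Ω, 0 ≤ w x))
    (hvwH : Integrable
      (fun x => polFun u c (Ω.indicator v) x * polFun u c (Ω.indicator w) x)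
      (volume.restrict Ω)) :
    ∫ x in Ω, v x * w x ≤
      ∫ x in Ω, polFun u c (Ω.indicator v) x * polFun u c (Ω.indicator w) x := by
  have hΩm : MeasurableSet Ω := hopen.measurableSet
  have hpol := polFun_mul_polFun_indicator_ae_eq hu hΩm hΩ.symm.subset hsign
  rw [← integral_indicator hΩm, ← integral_indicator hΩm, ← integral_congr_ae hpol,
    Set.indicator_mul]
  refine integral_le_integral_of_add_comp_le (measurePreserving_reflHyp (c := c) hu)
    (reflHyp_involutive hu) ?_ (((integrable_indicator_iff hΩm).2 hvwH).congr hpol.symm) ?_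
  · simpa only [← Set.indicator_mul] using (integrable_indicator_iff hΩm).2 hvw
  · filter_upwards [ae_inner_ne hu] with x hx
    exact mul_add_mul_reflHyp_le_polFun hu _ _ hx

/-- (Hardy–Littlewood inequality for polarization on a domain.) For
`p ∈ (1, ∞)`, a half-space `H` with `0 ∈ closure H`, a bounded open `Ω` with `Ω = Ω_H`, and
`v, w ∈ L^p(Ω)` with `v·w` and `v_H·w_H` integrable on `Ω` and at least one of `v, w`
nonnegative a.e. on `Ω`, one has `∫_Ω v w ≤ ∫_Ω v_H w_H`. -/
theorem polFun_hardy_littlewood_domain {N : ℕ} (p : ℝ≥0∞) (hp1 : 1 < p) (hptop : p ≠ ⊤)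
    (u : EuclideanSpace ℝ (Fin N)) (hu : ‖u‖ = 1) (c : ℝ)
    (h0 : (0 : EuclideanSpace ℝ (Fin N)) ∈ closure (halfSpace u c))
    (Ω : Set (EuclideanSpace ℝ (Fin N))) (hbdd : Bornology.IsBounded Ω) (hopen : IsOpen Ω)
    (hΩ : Ω = polSet u c Ω)
    (v w : EuclideanSpace ℝ (Fin N) → ℝ)
    (hv : MemLp v p (volume.restrict Ω)) (hw : MemLp w p (volume.restrict Ω))
    (hvw : Integrable (fun x => v x * w x) (volume.restrict Ω))
    (hsign : (∀ᵐ x ∂volume.restrict Ω, 0 ≤ v x) ∨ (∀ᵐ x ∂volume.restrict Ω, 0 ≤ w x))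
    (hvwH : Integrable
      (fun x => polFun u c (Ω.indicator v) x * polFun u c (Ω.indicator w) x)
      (volume.restrict Ω)) :
    ∫ x in Ω, v x * w x ≤
      ∫ x in Ω, polFun u c (Ω.indicator v) x * polFun u c (Ω.indicator w) x :=
  polFun_hardy_littlewood_domain_general u hu c Ω hopen hΩ v w hvw hsign hvwH
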